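/- arXiv:math/0011258 — 2 statements merged into one kernel-verified Lean document; each statement's English description precedes it below -/
import Mathlib

section
/- Let n ≥ 2 and let f₁, …, fₙ : Δ → ℂ be holomorphic functions on a connected open set Δ ⊆ ℂ, with f₁ nonconstant. Assume that for no nonempty open U ⊆ Δ is the image of z ↦ (1, f₁(z), …, fₙ(z)) contained in the common zero locus of n−1 independent real linear forms (i.e., the curve is not locally contained in a projective line defined over ℝ). Then the set {z ∈ Δ : there exists a nonzero q ∈ ℚ^{n+1} with q₀ + q₁f₁(z) + ⋯ + qₙfₙ(z) = 0} is dense in Δ. -/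
/-!
Fix `P ∈ Δ`. Real coefficients `a` with `∑ aᵢ fᵢ(P) = 0` form the kernel of a real-linear map
`ℝⁿ⁺¹ → ℂ ≅ ℝ²`, so they span a space of dimension at least `n - 1`. If every such combination
vanished on all of `Δ`, a basis of `n - 1` of them would put the curve in a real projective line.
So some `g = ∑ aᵢ fᵢ` vanishes at `P` without vanishing identically; its zero at `P` is then
isolated, and `‖g‖` is bounded below by some `m > 0` on a small circle around `P`. A rational
`q` close enough to `a` gives `h = ∑ qᵢ fᵢ` with `‖h - g‖ < m / 2` on the closed disc, and the
minimum modulus principle (Rouché's argument) produces a zero of `h` inside the disc.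
-/

open Metric Module Filter Topology

section RealRelations

variable {ι : Type*} [Fintype ι]

theorem card_sub_two_le_finrank_ker_linearCombination (v : ι → ℂ) :
    Fintype.card ι - 2 ≤ finrank ℝ (LinearMap.ker (Fintype.linearCombination ℝ v)) := by
  have hrank := (Fintype.linearCombination ℝ v).finrank_range_add_finrank_ker
  have hrange := Submodule.finrank_le (LinearMap.range (Fintype.linearCombination ℝ v))
  rw [Complex.finrank_real_complex] at hrange
  rw [Module.finrank_fintype_fun_eq_card] at hrank
  omega

theorem exists_real_relation_at_not_vanishing_on {X : Type*} {k : ℕ}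
    (hk : k ≤ Fintype.card ι - 2) (S : Set X) (f : ι → X → ℂ)
    (hnd : ¬ ∃ L : Fin k → ι → ℝ, LinearIndependent ℝ L ∧
      ∀ z ∈ S, ∀ j, (∑ i, (L j i : ℂ) * f i z) = 0) (x : X) :
    ∃ a : ι → ℝ, ∑ i, (a i : ℂ) * f i x = 0 ∧ ∃ z ∈ S, ∑ i, (a i : ℂ) * f i z ≠ 0 := by
  set W := LinearMap.ker (Fintype.linearCombination ℝ fun i => f i x)
  have hW : ∀ a ∈ W, ∑ i, (a i : ℂ) * f i x = 0 := fun a ha => by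
    simpa [W, Fintype.linearCombination_apply, Complex.real_smul] using ha
  by_contra! hvanish
  obtain ⟨L, hL⟩ := exists_linearIndependent_of_le_finrank (R := ℝ) (M := W)
    (hk.trans (card_sub_two_le_finrank_ker_linearCombination _))
  exact hnd ⟨fun j => L j, hL.map' W.subtype W.ker_subtype,
    fun z hz j => hvanish _ (hW _ (L j).2) z hz⟩

theorem norm_sum_ofReal_mul_sub_le (x a : ι → ℝ) (v : ι → ℂ) :
    ‖∑ i, (x i : ℂ) * v i - ∑ i, (a i : ℂ) * v i‖ ≤ dist x a * ∑ i, ‖v i‖ := by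
  rw [← Finset.sum_sub_distrib, Finset.mul_sum]
  refine norm_sum_le_of_le _ fun i _ => ?_
  rw [← sub_mul, ← Complex.ofReal_sub, norm_mul, Complex.norm_real, ← dist_eq_norm]
  exact mul_le_mul_of_nonneg_right (dist_le_pi_dist x a i) (norm_nonneg _)

theorem exists_ratCast_ne_zero_dist_lt {a : ι → ℝ} (ha : a ≠ 0) {δ : ℝ} (hδ : 0 < δ) :
    ∃ q : ι → ℚ, q ≠ 0 ∧ dist (fun i => (q i : ℝ)) a < δ := by
  have hdense : DenseRange (Pi.map fun _ : ι => ((↑) : ℚ → ℝ)) :=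
    DenseRange.piMap fun _ => Rat.denseRange_cast
  obtain ⟨q, hq_dist, hq_ne⟩ := hdense.exists_mem_open (isOpen_ball.inter isOpen_ne)
    ⟨a, mem_ball_self hδ, ha⟩
  refine ⟨q, ?_, hq_dist⟩
  rintro rfl
  exact hq_ne (funext fun _ => Rat.cast_zero)

end RealRelations

section MinimumModulus

theorem Complex.exists_eq_zero_of_norm_lt_on_sphere {h : ℂ → ℂ} {c : ℂ} {r : ℝ} (hr : 0 < r)
    (hh : DiffContOnCl ℂ h (ball c r)) (hlt : ∀ z ∈ sphere c r, ‖h c‖ < ‖h z‖) :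
    ∃ z ∈ ball c r, h z = 0 := by
  by_contra! hne
  have hne' : ∀ z ∈ closure (ball c r), h z ≠ 0 := by
    intro z hz
    rw [closure_ball c hr.ne'] at hz
    rcases (mem_closedBall.mp hz).eq_or_lt with hz | hz
    · exact norm_pos_iff.mp ((norm_nonneg _).trans_lt (hlt z (mem_sphere.mpr hz)))
    · exact hne z (mem_ball.mpr hz)
  obtain ⟨w, hw, hmax⟩ := Complex.exists_mem_frontier_isMaxOn_norm isBounded_ball
    (nonempty_ball.mpr hr) (hh.inv hne')
  rw [frontier_ball c hr.ne'] at hw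
  have hcw : ‖h c‖⁻¹ ≤ ‖h w‖⁻¹ := by
    simpa using hmax (subset_closure (mem_ball_self hr))
  have hc : 0 < ‖h c‖ := norm_pos_iff.mpr (hne' c (subset_closure (mem_ball_self hr)))
  exact (hlt w hw).not_ge ((inv_le_inv₀ hc (hc.trans (hlt w hw))).mp hcw)

theorem Complex.exists_eq_zero_of_norm_sub_lt {g h : ℂ → ℂ} {c : ℂ} {r m : ℝ} (hr : 0 < r)
    (hh : DiffContOnCl ℂ h (ball c r)) (hgc : g c = 0) (hgm : ∀ z ∈ sphere c r, m ≤ ‖g z‖)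
    (hhg : ∀ z ∈ closedBall c r, ‖h z - g z‖ < m / 2) : ∃ z ∈ ball c r, h z = 0 := by
  refine exists_eq_zero_of_norm_lt_on_sphere hr hh fun z hz => ?_
  have hc := hhg c (mem_closedBall_self hr.le)
  rw [hgc, sub_zero] at hc
  have hz' := hhg z (sphere_subset_closedBall hz)
  have htri := norm_sub_norm_le (g z) (h z)
  rw [norm_sub_rev] at htri
  linarith [hgm z hz]

theorem AnalyticOnNhd.exists_sphere_norm_ge_of_exists_ne_zero {g : ℂ → ℂ} {Δ : Set ℂ}
    (hΔ : IsOpen Δ) (hconn : IsPreconnected Δ) (hg : AnalyticOnNhd ℂ g Δ) {c : ℂ} (hc : c ∈ Δ)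
    (hne : ∃ z ∈ Δ, g z ≠ 0) {ε : ℝ} (hε : 0 < ε) :
    ∃ r, 0 < r ∧ r < ε ∧ closedBall c r ⊆ Δ ∧ ∃ m > 0, ∀ z ∈ sphere c r, m ≤ ‖g z‖ := by
  have hiso : ∀ᶠ z in 𝓝[≠] c, g z ≠ 0 := by
    refine (hg c hc).eventually_eq_zero_or_eventually_ne_zero.resolve_left fun hzero => ?_
    obtain ⟨z, hz, hgz⟩ := hne
    exact hgz (hg.eqOn_zero_of_preconnected_of_eventuallyEq_zero hconn hc hzero hz)
  obtain ⟨δ, hδ, hδg⟩ :=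
    Metric.eventually_nhds_iff.mp ((eventually_nhdsWithin_iff.mp hiso).and (hΔ.mem_nhds hc))
  set r := min δ ε / 2 with hr_def
  have hmin : 0 < min δ ε := lt_min hδ hε
  have hr : 0 < r := by positivity
  have hrδ : r < δ := by linarith [min_le_left δ ε]
  have hrε : r < ε := by linarith [min_le_right δ ε]
  have hsub : closedBall c r ⊆ ball c δ := closedBall_subset_ball hrδ
  have hsubΔ : closedBall c r ⊆ Δ := fun z hz => (hδg (hsub hz)).2
  obtain ⟨w, hw, hmin⟩ := (isCompact_sphere c r).exists_isMinOn
    (NormedSpace.sphere_nonempty.mpr hr.le)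
    (hg.continuousOn.mono (sphere_subset_closedBall.trans hsubΔ)).norm
  have hgw : g w ≠ 0 :=
    (hδg (hsub (sphere_subset_closedBall hw))).1 (ne_of_mem_sphere hw hr.ne')
  exact ⟨r, hr, hrε, hsubΔ, ‖g w‖, norm_pos_iff.mpr hgw, fun z hz => hmin hz⟩

end MinimumModulus

theorem exists_rational_relation_near {ι : Type*} [Fintype ι] {Δ : Set ℂ} (hΔ : IsOpen Δ)
    (hconn : IsPreconnected Δ) {f : ι → ℂ → ℂ} (hf : ∀ i, DifferentiableOn ℂ (f i) Δ)
    {a : ι → ℝ} {c : ℂ} (hc : c ∈ Δ) (hac : ∑ i, (a i : ℂ) * f i c = 0)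
    (ha : ∃ z ∈ Δ, ∑ i, (a i : ℂ) * f i z ≠ 0) {ε : ℝ} (hε : 0 < ε) :
    ∃ z ∈ Δ, dist z c < ε ∧ ∃ q : ι → ℚ, q ≠ 0 ∧ ∑ i, (q i : ℂ) * f i z = 0 := by
  have hcomb (x : ι → ℝ) : DifferentiableOn ℂ (fun z => ∑ i, (x i : ℂ) * f i z) Δ :=
    DifferentiableOn.fun_sum fun i _ => (hf i).const_mul _
  obtain ⟨r, hr, hrε, hrΔ, m, hm, hgm⟩ :=
    ((hcomb a).analyticOnNhd hΔ).exists_sphere_norm_ge_of_exists_ne_zero hΔ hconn hc ha hε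
  obtain ⟨M, hM⟩ := (isCompact_closedBall c r).exists_bound_of_continuousOn
    (f := fun z => ∑ i, ‖f i z‖)
    (continuousOn_finsetSum _ fun i _ => ((hf i).continuousOn.mono hrΔ).norm)
  obtain ⟨δ, hδ, hMδ⟩ := exists_pos_mul_lt (half_pos hm) M
  have ha0 : a ≠ 0 := by
    rintro rfl
    simp at ha
  obtain ⟨q, hq, hqa⟩ := exists_ratCast_ne_zero_dist_lt ha0 hδ
  have hclose (z) (hz : z ∈ closedBall c r) :
      ‖∑ i, ((q i : ℝ) : ℂ) * f i z - ∑ i, (a i : ℂ) * f i z‖ < m / 2 := by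
    have hMz : ∑ i, ‖f i z‖ ≤ M := (Real.le_norm_self _).trans (hM z hz)
    calc _ ≤ dist (fun i => (q i : ℝ)) a * ∑ i, ‖f i z‖ := norm_sum_ofReal_mul_sub_le _ _ _
      _ ≤ δ * M := mul_le_mul hqa.le hMz (by positivity) hδ.le
      _ < m / 2 := by linarith
  have hdiff : DiffContOnCl ℂ (fun z => ∑ i, ((q i : ℝ) : ℂ) * f i z) (ball c r) :=
    ((hcomb _).mono (by rwa [closure_ball c hr.ne'])).diffContOnCl
  obtain ⟨z, hz, hqz⟩ := Complex.exists_eq_zero_of_norm_sub_lt hr hdiff hac hgm hclose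
  refine ⟨z, hrΔ (ball_subset_closedBall hz), (mem_ball.mp hz).trans hrε, q, hq, ?_⟩
  simpa only [Complex.ofReal_ratCast] using hqz

theorem rational_relations_dense_general (n : ℕ)
    (Δ : Set ℂ) (hΔ : IsOpen Δ) (hconn : IsConnected Δ)
    (f : Fin (n + 1) → ℂ → ℂ)
    (hf : ∀ i, DifferentiableOn ℂ (f i) Δ)
    (hnd : ¬ ∃ U : Set ℂ, IsOpen U ∧ U.Nonempty ∧ U ⊆ Δ ∧
      ∃ L : Fin (n - 1) → Fin (n + 1) → ℝ, LinearIndependent ℝ L ∧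
        ∀ z ∈ U, ∀ j, (∑ i, (L j i : ℂ) * f i z) = 0) :
    Δ ⊆ closure {z ∈ Δ | ∃ q : Fin (n + 1) → ℚ, q ≠ 0 ∧
      (∑ i, (q i : ℂ) * f i z) = 0} := by
  intro P hP
  rw [Metric.mem_closure_iff]
  intro ε hε
  obtain ⟨a, haP, ha⟩ := exists_real_relation_at_not_vanishing_on (k := n - 1) (by simp) Δ f
    (fun ⟨L, hL, hLΔ⟩ => hnd ⟨Δ, hΔ, hconn.nonempty, subset_rfl, L, hL, hLΔ⟩) P
  obtain ⟨z, hzΔ, hzP, q, hq, hqz⟩ :=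
    exists_rational_relation_near hΔ hconn.isPreconnected hf hP haP ha hε
  exact ⟨z, ⟨hzΔ, q, hq, hqz⟩, by rwa [dist_comm]⟩

theorem rational_relations_dense (n : ℕ) (hn : 2 ≤ n)
    (Δ : Set ℂ) (hΔ : IsOpen Δ) (hconn : IsConnected Δ)
    (f : Fin (n + 1) → ℂ → ℂ)
    (h0 : ∀ z ∈ Δ, f 0 z = 1)
    (hf : ∀ i, DifferentiableOn ℂ (f i) Δ)
    (hnc : ¬ ∃ c : ℂ, ∀ z ∈ Δ, f 1 z = c)
    (hnd : ¬ ∃ U : Set ℂ, IsOpen U ∧ U.Nonempty ∧ U ⊆ Δ ∧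
      ∃ L : Fin (n - 1) → Fin (n + 1) → ℝ, LinearIndependent ℝ L ∧
        ∀ z ∈ U, ∀ j, (∑ i, (L j i : ℂ) * f i z) = 0) :
    Δ ⊆ closure {z ∈ Δ | ∃ q : Fin (n + 1) → ℚ, q ≠ 0 ∧
      (∑ i, (q i : ℂ) * f i z) = 0} :=
  rational_relations_dense_general n Δ hΔ hconn f hf hnd
end

section
/- Let τ ∈ ℍ and let φ be a holomorphic function defined on a neighborhood of τ with φ(τ) ∈ ℍ. Then there exists a sequence τ_k ∈ ℍ \ {τ} with τ_k → τ such that for each k there exist rational numbers a, b, c, d with ad − bc > 0 and φ(τ_k) = (aτ_k + b)/(cτ_k + d). -/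
/-!
Fix `d ∈ ℚ` and put `g z = φ z * (z + d)`. Whenever `g z - p z = q` with `p, q ∈ ℚ`, we get
`φ z = (p z + q) / (z + d)`, and the determinant `p d - q` is positive because `z` and `φ z` both
lie in `ℍ`. The only real `p` for which `g τ - p τ` is real is `p₀ = Im (g τ) / Im τ`. Choosing
`d ∈ {0, 1}` with `g' τ ≠ p₀`, the real map `(p, z) ↦ (p, g z - p z)` on `ℝ × ℂ` has surjective
derivative at `(p₀, τ)`, so by the inverse function theorem it maps every neighbourhood of
`(p₀, τ)` onto a neighbourhood of the real point `(p₀, g τ - p₀ τ)`. That neighbourhood contains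
rational pairs `(p, q)` with `p ≠ p₀`, and `p ≠ p₀` forces the corresponding `z` to differ from `τ`.
-/

open Filter Topology Set

theorem Complex.im_linear_div_linear (a b c d : ℝ) (z : ℂ) :
    ((a * z + b) / (c * z + d)).im = (a * d - b * c) * z.im / Complex.normSq (c * z + d) := by
  simp only [Complex.div_im, Complex.add_im, Complex.add_re, Complex.im_ofReal_mul,
    Complex.re_ofReal_mul, Complex.ofReal_im, Complex.ofReal_re]
  ring

theorem Complex.det_pos_of_im_linear_div_linear_pos {a b c d : ℝ} {z : ℂ} (hz : 0 < z.im)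
    (h : 0 < ((a * z + b) / (c * z + d)).im) : 0 < a * d - b * c := by
  by_contra! hdet
  rw [Complex.im_linear_div_linear] at h
  exact h.not_ge (div_nonpos_of_nonpos_of_nonneg (mul_nonpos_of_nonpos_of_nonneg hdet hz.le)
    (Complex.normSq_nonneg _))

theorem exists_rat_moebius_of_mul_add_sub_mul_eq {z w : ℂ} {p q d : ℚ} (hz : 0 < z.im)
    (hw : 0 < w.im) (h : w * (z + d) - p * z = q) :
    ∃ a b c d : ℚ, 0 < a * d - b * c ∧ w = (a * z + b) / (c * z + d) := by
  have hzd : z + (d : ℝ) ≠ 0 := fun h0 => hz.ne' (by simpa using congrArg Complex.im h0)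
  have hw' : w = ((p : ℝ) * z + (q : ℝ)) / ((1 : ℝ) * z + (d : ℝ)) := by
    rw [Complex.ofReal_one, one_mul, eq_div_iff hzd]
    push_cast
    linear_combination h
  have hdet := Complex.det_pos_of_im_linear_div_linear_pos hz (hw' ▸ hw)
  exact ⟨p, q, 1, d, by exact_mod_cast hdet, by simpa using hw'⟩

-- Both sides are affine in `d`; agreement at `d = 0` and `d = 1` would make `φ'` the real number
-- `Im (φ τ) / Im τ`, and then the imaginary parts at `d = 0` give `2 Im (φ τ) = 0`.
theorem HasStrictDerivAt.exists_ratCast_shift_deriv_ne_slope {φ : ℂ → ℂ} {φ' τ : ℂ}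
    (hφ : HasStrictDerivAt φ φ' τ) (hτ : τ.im ≠ 0) (hφτ : (φ τ).im ≠ 0) :
    ∃ d : ℚ, ∃ g', HasStrictDerivAt (fun z => φ z * (z + d)) g' τ ∧
      g' ≠ ((φ τ * (τ + d)).im / τ.im : ℝ) := by
  suffices ∃ d : ℚ, φ' * (τ + d) + φ τ ≠ ((φ τ * (τ + d)).im / τ.im : ℝ) by
    obtain ⟨d, hd⟩ := this
    exact ⟨d, _, hφ.mul ((hasStrictDerivAt_id τ).add_const _), by simpa using hd⟩
  by_contra! h
  have h0 := Complex.ext_iff.1 (h 0)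
  have h1 := Complex.ext_iff.1 (h 1)
  simp only [Rat.cast_zero, Rat.cast_one, add_zero, Complex.add_re, Complex.add_im,
    Complex.mul_re, Complex.mul_im, Complex.ofReal_re, Complex.ofReal_im, Complex.one_re,
    Complex.one_im] at h0 h1
  field_simp at h0 h1
  have him : φ'.im = 0 := by linear_combination h1.2 - h0.2
  have hre : τ.im * φ'.re = (φ τ).im := by linear_combination h1.1 - h0.1
  exact hφτ (by linear_combination (h0.2 - hre - τ.re * him) / 2)

theorem HasStrictDerivAt.map_nhds_prod_sub_smul {g : ℂ → ℂ} {g' τ : ℂ} {p₀ : ℝ}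
    (hg : HasStrictDerivAt g g' τ) (hg' : g' ≠ p₀) :
    map (fun x : ℝ × ℂ => (x.1, g x.2 - x.1 • x.2)) (𝓝 (p₀, τ)) = 𝓝 (p₀, g τ - p₀ • τ) := by
  have hΦ := (hasStrictFDerivAt_fst (𝕜 := ℝ) (p := (p₀, τ))).prodMk
    (((hg.hasStrictFDerivAt.restrictScalars ℝ).comp (p₀, τ) hasStrictFDerivAt_snd).sub
      (hasStrictFDerivAt_fst.smul hasStrictFDerivAt_snd))
  refine hΦ.map_nhds_eq_of_surj (LinearMap.range_eq_top.2 fun y => ?_)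
  refine ⟨(y.1, (y.2 + y.1 • τ) / (g' - p₀)), ?_⟩
  have hne : g' - p₀ ≠ 0 := sub_ne_zero.2 hg'
  ext
  · simp
  · simp [field]
    ring

theorem mem_closure_ratCast_pairs (a b : ℝ) :
    (a, (b : ℂ)) ∈ closure {x : ℝ × ℂ | ∃ p q : ℚ, (p : ℝ) ≠ a ∧ x = ((p : ℝ), (q : ℂ))} := by
  have hdense : Dense ((range ((↑) : ℚ → ℝ) \ {a}) ×ˢ range ((↑) : ℚ → ℝ)) :=
    (Rat.denseRange_cast.sdiff_singleton a).prod Rat.denseRange_cast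
  have hι := image_closure_subset_closure_image (s := (range ((↑) : ℚ → ℝ) \ {a}) ×ˢ
    range ((↑) : ℚ → ℝ)) (continuous_id.prodMap Complex.continuous_ofReal)
  refine closure_mono ?_ (hι ⟨(a, b), hdense.closure_eq ▸ trivial, rfl⟩)
  rintro _ ⟨⟨_, _⟩, ⟨⟨⟨p, rfl⟩, hp⟩, ⟨q, rfl⟩⟩, rfl⟩
  exact ⟨p, q, hp, by simp⟩

theorem HasStrictDerivAt.frequently_sub_mul_eq_ratCast {g : ℂ → ℂ} {g' τ : ℂ}
    (hg : HasStrictDerivAt g g' τ) (hτ : τ.im ≠ 0) (hg' : g' ≠ ((g τ).im / τ.im : ℝ)) :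
    ∃ᶠ z in 𝓝 τ, z ≠ τ ∧ ∃ p q : ℚ, g z - p * z = q := by
  set p₀ := (g τ).im / τ.im
  have hreal : g τ - p₀ • τ = ((g τ - p₀ • τ).re : ℂ) := by
    apply Complex.ext <;> simp [p₀, hτ]
  rw [frequently_iff]
  intro V hV
  have hmem : (fun x : ℝ × ℂ => (x.1, g x.2 - x.1 • x.2)) '' (univ ×ˢ V) ∈
      𝓝 (p₀, g τ - p₀ • τ) :=
    hg.map_nhds_prod_sub_smul hg' ▸ image_mem_map (prod_mem_nhds univ_mem hV)
  rw [hreal] at hmem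
  obtain ⟨_, ⟨⟨p', z⟩, ⟨-, hzV⟩, hΦ⟩, p, q, hp, rfl⟩ :=
    mem_closure_iff_nhds.1 (mem_closure_ratCast_pairs _ _) _ hmem
  obtain ⟨rfl, hz⟩ := Prod.mk.inj hΦ
  refine ⟨z, hzV, ?_, p, q, by simpa [Complex.real_smul] using hz⟩
  intro hzτ
  rw [hzτ] at hz
  have him : (g τ).im - p * τ.im = 0 := by simpa using congrArg Complex.im hz
  exact hp (by rw [eq_div_iff hτ]; linarith)

theorem rational_equivalence_points_accumulate
    (τ : ℂ) (hτ : 0 < τ.im) (U : Set ℂ) (hU : IsOpen U) (hτU : τ ∈ U)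
    (φ : ℂ → ℂ) (hφ : DifferentiableOn ℂ φ U) (hφτ : 0 < (φ τ).im) :
    ∃ t : ℕ → ℂ,
      (∀ k, t k ≠ τ ∧ 0 < (t k).im ∧
        ∃ a b c d : ℚ, 0 < a * d - b * c ∧
          φ (t k) = ((a : ℂ) * t k + b) / ((c : ℂ) * t k + d)) ∧
      Filter.Tendsto t Filter.atTop (nhds τ) := by
  have hφan : AnalyticAt ℂ φ τ := hφ.analyticAt (hU.mem_nhds hτU)
  obtain ⟨d, g', hg, hg'⟩ :=
    hφan.hasStrictDerivAt.exists_ratCast_shift_deriv_ne_slope hτ.ne' hφτ.ne'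
  have hpos : ∀ᶠ z in 𝓝 τ, 0 < z.im ∧ 0 < (φ z).im :=
    (continuousAt_const.eventually_lt Complex.continuous_im.continuousAt hτ).and
      (continuousAt_const.eventually_lt
        (Complex.continuous_im.continuousAt.comp hφan.continuousAt) hφτ)
  have hfreq : ∃ᶠ z in 𝓝 τ, z ≠ τ ∧ 0 < z.im ∧ ∃ a b c d : ℚ, 0 < a * d - b * c ∧
      φ z = ((a : ℂ) * z + b) / ((c : ℂ) * z + d) := by
    refine ((hg.frequently_sub_mul_eq_ratCast hτ.ne' hg').and_eventually hpos).mono ?_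
    rintro z ⟨⟨hzτ, p, q, hz⟩, hzim, hφz⟩
    exact ⟨hzτ, hzim, exists_rat_moebius_of_mul_add_sub_mul_eq hzim hφz hz⟩
  obtain ⟨t, htτ, ht⟩ := frequently_iff_seq_forall.1 hfreq
  exact ⟨t, ht, htτ⟩
end
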